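/- arXiv:1905.04695 — 4 statements merged into one kernel-verified Lean document; each statement's English description precedes it below -/
import Mathlib

section
/- A cycle C_n (n ≥ 3) has a fall 3-coloring if and only if 3 divides n. -/
/-!
In a fall 3-coloring of a cycle each vertex sees both other colors on its two neighbours, so any
three consecutive vertices carry three distinct colors. In `ℤ/3` this says that the color
advances by a constant nonzero step `d` along the cycle; going once around gives `n • d = 0`,
hence `3 ∣ n`. Conversely, if `3 ∣ n` then coloring each vertex by its residue mod 3 has this
form.
-/

open SimpleGraph

/-- A fall `k`-coloring of `G`: a partition of the vertex set into `k` color classes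
(each class independent) such that every vertex is colorful, i.e. adjacent to at least
one vertex of every color class other than its own. -/
def IsFallColoring {V : Type*} (G : SimpleGraph V) (k : ℕ) (c : V → Fin k) : Prop :=
  (∀ u v, G.Adj u v → c u ≠ c v) ∧
  (∀ v : V, ∀ j : Fin k, j ≠ c v → ∃ w, G.Adj v w ∧ c w = j)

/-- `S` is an independent dominating set of `G`. -/
def IsIndepDomSet {V : Type*} (G : SimpleGraph V) (S : Set V) : Prop :=
  (∀ u ∈ S, ∀ v ∈ S, ¬ G.Adj u v) ∧ (∀ v : V, v ∉ S → ∃ u ∈ S, G.Adj v u)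

open Fin.NatCast Fin.CommRing

lemma Fin.sub_eq_sub_of_pairwise_ne {a b c : Fin 3} (hab : a ≠ b) (hbc : b ≠ c)
    (hac : a ≠ c) :
    c - b = b - a := by
  revert a b c; decide

lemma Fin.eq_add_or_eq_sub_of_ne {a j d : Fin 3} (hd : d ≠ 0) (hj : j ≠ a) :
    j = a + d ∨ j = a - d := by
  revert a j d; decide

lemma Fin.three_dvd_of_nsmul_eq_zero {d : Fin 3} (hd : d ≠ 0) {n : ℕ} (h : n • d = 0) :
    3 ∣ n := by
  have h3 : addOrderOf d = 3 := addOrderOf_eq_prime ((by decide : ∀ x : Fin 3, 3 • x = 0) d) hd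
  exact h3 ▸ addOrderOf_dvd_of_nsmul_eq_zero h

lemma Fin.nsmul_eq_zero_of_forall_sub_eq {A : Type*} [AddCommGroup A] {n : ℕ} [NeZero n]
    {f : Fin n → A} {d : A} (h : ∀ v, f (v + 1) - f v = d) : n • d = 0 := by
  calc n • d = ∑ v, (f (v + 1) - f v) := by simp [h]
    _ = ∑ v, f (v + 1) - ∑ v, f v := Finset.sum_sub_distrib ..
    _ = 0 := sub_eq_zero.2 (Equiv.sum_comp (Equiv.addRight 1) f)

lemma Fin.apply_eq_apply_zero_of_forall_apply_add_one {α : Type*} {n : ℕ} [NeZero n]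
    {f : Fin n → α} (h : ∀ v, f (v + 1) = f v) (v : Fin n) : f v = f 0 := by
  have key : ∀ k : ℕ, f k = f 0 := by
    intro k
    induction k with
    | zero => simp
    | succ k ih => rw [Nat.cast_succ, h, ih]
  simpa using key v.val

lemma Fin.natCast_val_add_of_dvd {k n : ℕ} [NeZero k] [NeZero n] (h : k ∣ n) (u v : Fin n) :
    (((u + v).val : ℕ) : Fin k) = u.val + v.val := by
  apply Fin.ext
  simp [Fin.val_add, Fin.val_natCast, Nat.mod_mod_of_dvd _ h]

lemma SimpleGraph.cycleGraph_adj_add_one {n : ℕ} (v : Fin (n + 2)) :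
    (cycleGraph (n + 2)).Adj v (v + 1) := by
  simp [cycleGraph_adj]

lemma SimpleGraph.cycleGraph_adj_sub_one {n : ℕ} (v : Fin (n + 2)) :
    (cycleGraph (n + 2)).Adj v (v - 1) := by
  simp [cycleGraph_adj]

namespace IsFallColoring

variable {V : Type*} {G : SimpleGraph V} {c : V → Fin 3}

lemma apply_ne_of_neighborSet_subset (hc : IsFallColoring G 3 c) {v a b : V}
    (hv : G.neighborSet v ⊆ {a, b}) : c a ≠ c b := by
  intro hab
  have only_color : ∀ j, j ≠ c v → j = c a := by
    intro j hj
    obtain ⟨w, hvw, rfl⟩ := hc.2 v j hj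
    rcases hv hvw with rfl | rfl
    · rfl
    · exact hab.symm
  obtain ⟨j, hjv, hja⟩ : ∃ j, j ≠ c v ∧ j ≠ c a := by
    generalize c v = x; generalize c a = y; revert x y; decide
  exact hja (only_color j hjv)

end IsFallColoring

lemma isFallColoring_cycleGraph_iff {n : ℕ} (c : Fin (n + 2) → Fin 3) :
    IsFallColoring (cycleGraph (n + 2)) 3 c ↔ ∃ d ≠ 0, ∀ v, c (v + 1) - c v = d := by
  constructor
  · intro hc
    have step_eq : ∀ v, c (v + 1) - c v = c v - c (v - 1) := fun v =>
      Fin.sub_eq_sub_of_pairwise_ne (hc.1 _ _ (cycleGraph_adj_sub_one v).symm)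
        (hc.1 _ _ (cycleGraph_adj_add_one v))
        (hc.apply_ne_of_neighborSet_subset cycleGraph_neighborSet.subset)
    refine ⟨c (0 + 1) - c 0, sub_ne_zero.2 (hc.1 _ _ (cycleGraph_adj_add_one 0)).symm,
      Fin.apply_eq_apply_zero_of_forall_apply_add_one (f := fun v => c (v + 1) - c v) ?_⟩
    intro v
    simpa using step_eq (v + 1)
  · rintro ⟨d, hd, hcd⟩
    have hne : ∀ v, c v ≠ c (v + 1) := fun v h => hd (by rw [← hcd v, h, sub_self])
    refine ⟨fun u v huv => ?_, fun v j hj => ?_⟩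
    · rw [← mem_neighborSet, cycleGraph_neighborSet] at huv
      rcases huv with rfl | rfl
      · simpa using (hne (u - 1)).symm
      · exact hne u
    · rcases Fin.eq_add_or_eq_sub_of_ne hd hj with rfl | rfl
      · exact ⟨v + 1, cycleGraph_adj_add_one v, by rw [← hcd v, add_sub_cancel]⟩
      · refine ⟨v - 1, cycleGraph_adj_sub_one v, ?_⟩
        rw [← hcd (v - 1), sub_add_cancel, sub_sub_cancel]

theorem cycle_fall_three_iff_three_dvd (n : ℕ) (hn : 3 ≤ n) :
    (∃ c : Fin n → Fin 3, IsFallColoring (cycleGraph n) 3 c) ↔ 3 ∣ n := by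
  obtain ⟨m, rfl⟩ : ∃ m, n = m + 2 := ⟨n - 2, by omega⟩
  simp only [isFallColoring_cycleGraph_iff]
  constructor
  · rintro ⟨c, d, hd, hcd⟩
    exact Fin.three_dvd_of_nsmul_eq_zero hd (Fin.nsmul_eq_zero_of_forall_sub_eq hcd)
  · intro h3
    refine ⟨fun v => (v.val : Fin 3), 1, one_ne_zero, fun v => ?_⟩
    dsimp only
    rw [Fin.natCast_val_add_of_dvd h3, Fin.val_one, Nat.cast_one, add_sub_cancel_left]
end

section
/- A k-regular graph G (with k ≥ 1) admits a proper edge k-coloring if and only if its line graph L(G) admits a fall k-coloring. -/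
open SimpleGraph

/-- A proper edge `k`-coloring of `G`: edges sharing an endpoint (equivalently,
adjacent vertices of the line graph) receive distinct colors. -/
def IsProperEdgeColoring {V : Type*} (G : SimpleGraph V) (k : ℕ)
    (c : G.edgeSet → Fin k) : Prop :=
  ∀ e₁ e₂ : G.edgeSet, (G.lineGraph).Adj e₁ e₂ → c e₁ ≠ c e₂

theorem regular_edge_coloring_iff_lineGraph_fall {V : Type*} [Fintype V]
    (G : SimpleGraph V) [DecidableRel G.Adj] (k : ℕ) (hk : 1 ≤ k)
    (hreg : G.IsRegularOfDegree k) :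
    (∃ c : G.edgeSet → Fin k, IsProperEdgeColoring G k c) ↔
      (∃ c : G.edgeSet → Fin k, IsFallColoring (G.lineGraph) k c) := by
  classical
  constructor
  · rintro ⟨c, hc⟩
    refine ⟨c, fun e₁ e₂ h => hc e₁ e₂ h, ?_⟩
    intro e j hj
    set u : V := (e : Sym2 V).out.1 with hu
    have hue : u ∈ (e : Sym2 V) := Sym2.out_fst_mem _
    -- the finset of edges incident to u
    set S : Finset G.edgeSet := Finset.univ.filter (fun f => u ∈ (f : Sym2 V)) with hS
    have hinj : Set.InjOn c S := by
      intro f₁ h₁ f₂ h₂ hcc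
      by_contra hne
      exact hc f₁ f₂ ⟨hne, u, by simp [hS] at h₁ h₂; exact ⟨h₁, h₂⟩⟩ hcc
    have hcard : S.card = k := by
      have himg : S.image (Subtype.val) = G.incidenceFinset u := by
        ext f
        simp only [Finset.mem_image, mem_incidenceFinset, incidenceSet, hS,
          Finset.mem_filter, Finset.mem_univ, true_and]
        constructor
        · rintro ⟨g, hg, rfl⟩; exact ⟨g.2, hg⟩
        · rintro ⟨hf, hu⟩; exact ⟨⟨f, hf⟩, hu, rfl⟩
      have := G.card_incidenceFinset_eq_degree u
      rw [← himg, Finset.card_image_of_injective _ Subtype.val_injective] at this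
      rw [this, hreg u]
    have himg2 : S.image c = Finset.univ := by
      apply Finset.eq_univ_of_card
      rw [Finset.card_image_of_injOn hinj, hcard, Fintype.card_fin]
    have hj' : j ∈ S.image c := by rw [himg2]; exact Finset.mem_univ j
    obtain ⟨f, hfS, hfc⟩ := Finset.mem_image.mp hj'
    refine ⟨f, ⟨?_, u, ?_, ?_⟩, hfc⟩
    · rintro rfl; exact hj (hfc.symm)
    · exact hue
    · simp [hS] at hfS; exact hfS
  · rintro ⟨c, hc⟩
    exact ⟨c, fun e₁ e₂ h => hc.1 e₁ e₂ h⟩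
end

section
/- A k-regular graph G is fall (k+1)-colorable if and only if the square G² is properly (k+1)-colorable. -/
open SimpleGraph

/-- The square of a graph: two distinct vertices are adjacent iff they are
adjacent in `G` or have a common neighbor (i.e. are at distance at most 2). -/
def SimpleGraph.square {V : Type*} (G : SimpleGraph V) : SimpleGraph V where
  Adj u v := u ≠ v ∧ (G.Adj u v ∨ ∃ w, G.Adj u w ∧ G.Adj w v)
  symm := ⟨by
    rintro u v ⟨hne, h | ⟨w, hw1, hw2⟩⟩
    · exact ⟨hne.symm, Or.inl h.symm⟩
    · exact ⟨hne.symm, Or.inr ⟨w, hw2.symm, hw1.symm⟩⟩⟩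
  loopless := ⟨fun v ⟨hne, _⟩ => hne rfl⟩

/-!
Both conditions say that `c` is injective on every closed neighbourhood `N[v]`. For the square this
is because two distinct vertices are adjacent in `G²` exactly when they lie in a common `N[w]`. For a
fall colouring, `N[v]` must meet all `k + 1` colour classes, and since `N[v]` has exactly `k + 1`
vertices, that happens exactly when `c` is injective on it.
-/

lemma Set.injOn_iff_image_eq_univ {α β : Type*} [Finite β] {s : Set α} {f : α → β}
    (hs : s.Finite) (hcard : s.ncard = Nat.card β) : s.InjOn f ↔ f '' s = univ := by
  rw [← Set.ncard_image_iff hs, Set.eq_univ_iff_ncard, hcard]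

namespace SimpleGraph

variable {V : Type*}

def closedNeighborSet (G : SimpleGraph V) (v : V) : Set V := insert v (G.neighborSet v)

variable {G : SimpleGraph V}

@[simp]
lemma mem_closedNeighborSet {v w : V} : w ∈ G.closedNeighborSet v ↔ w = v ∨ G.Adj v w :=
  Iff.rfl

lemma self_mem_closedNeighborSet (v : V) : v ∈ G.closedNeighborSet v :=
  Set.mem_insert v _

lemma ncard_closedNeighborSet (v : V) [Fintype (G.neighborSet v)] :
    (G.closedNeighborSet v).ncard = G.degree v + 1 := by
  rw [closedNeighborSet, Set.ncard_insert_of_notMem G.notMem_neighborSet_self,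
    Set.ncard_eq_toFinset_card', ← neighborFinset_def, card_neighborFinset_eq_degree]

lemma square_adj_iff {u v : V} :
    G.square.Adj u v ↔ u ≠ v ∧ ∃ w, u ∈ G.closedNeighborSet w ∧ v ∈ G.closedNeighborSet w := by
  refine and_congr_right fun hne => ⟨?_, ?_⟩
  · rintro (huv | ⟨w, huw, hwv⟩)
    · exact ⟨u, .inl rfl, .inr huv⟩
    · exact ⟨w, .inr huw.symm, .inr hwv⟩
  · rintro ⟨w, rfl | hwu, rfl | hwv⟩
    · exact absurd rfl hne
    · exact .inl hwv
    · exact .inl hwu.symm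
    · exact .inr ⟨w, hwu.symm, hwv⟩

lemma colorable_square_iff {n : ℕ} :
    G.square.Colorable n ↔ ∃ c : V → Fin n, ∀ v, Set.InjOn c (G.closedNeighborSet v) := by
  constructor
  · rintro ⟨C⟩
    refine ⟨C, fun w x hx y hy hxy => ?_⟩
    by_contra hne
    exact C.valid (square_adj_iff.2 ⟨hne, w, hx, hy⟩) hxy
  · rintro ⟨c, hc⟩
    refine ⟨Coloring.mk c fun {u v} huv => ?_⟩
    obtain ⟨hne, w, hu, hv⟩ := square_adj_iff.1 huv
    exact fun h => hne (hc w hu hv h)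

lemma isFallColoring_iff {n : ℕ} {c : V → Fin n} :
    IsFallColoring G n c ↔
      (∀ u v, G.Adj u v → c u ≠ c v) ∧ ∀ v, c '' G.closedNeighborSet v = Set.univ := by
  refine and_congr_right fun _ => forall_congr' fun v => ?_
  simp only [Set.eq_univ_iff_forall, Set.mem_image, mem_closedNeighborSet]
  refine forall_congr' fun j => ⟨fun h => ?_, fun h hj => ?_⟩
  · by_cases hj : j = c v
    · exact ⟨v, .inl rfl, hj.symm⟩
    · obtain ⟨w, hvw, rfl⟩ := h hj
      exact ⟨w, .inr hvw, rfl⟩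
  · obtain ⟨w, rfl | hvw, rfl⟩ := h
    · exact absurd rfl hj
    · exact ⟨w, hvw, rfl⟩

lemma isFallColoring_iff_forall_injOn [G.LocallyFinite] {k : ℕ} (hreg : G.IsRegularOfDegree k)
    {c : V → Fin (k + 1)} :
    IsFallColoring G (k + 1) c ↔ ∀ v, Set.InjOn c (G.closedNeighborSet v) := by
  have hcard (v : V) : (G.closedNeighborSet v).ncard = Nat.card (Fin (k + 1)) := by
    rw [ncard_closedNeighborSet, hreg v, Nat.card_fin]
  have hfin (v : V) : (G.closedNeighborSet v).Finite := (G.neighborSet v).toFinite.insert v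
  simp only [isFallColoring_iff, ← Set.injOn_iff_image_eq_univ (hfin _) (hcard _),
    and_iff_right_iff_imp]
  intro hinj u v huv
  exact fun h => huv.ne (hinj u (self_mem_closedNeighborSet u) (.inr huv) h)

end SimpleGraph

theorem regular_fall_succ_iff_square_colorable {V : Type*} [Fintype V]
    (G : SimpleGraph V) [DecidableRel G.Adj] (k : ℕ)
    (hreg : G.IsRegularOfDegree k) :
    (∃ c : V → Fin (k + 1), IsFallColoring G (k + 1) c) ↔
      (SimpleGraph.square G).Colorable (k + 1) := by
  rw [colorable_square_iff]
  exact exists_congr fun _ => isFallColoring_iff_forall_injOn hreg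
end

section
/- If G is a chordal graph and G admits a fall k-coloring, then k = δ(G) + 1, where δ(G) is the minimum degree of G. -/
open SimpleGraph

/-- A graph is chordal if every cycle of length at least 4 has a chord: a pair of
vertices of the cycle that are adjacent in the graph but not along the cycle. -/
def IsChordal {V : Type*} (G : SimpleGraph V) : Prop :=
  ∀ ⦃v : V⦄ (w : G.Walk v v), w.IsCycle → 4 ≤ w.length →
    ∃ x y : V, x ∈ w.support ∧ y ∈ w.support ∧ G.Adj x y ∧ s(x, y) ∉ w.edges

namespace ChordalAux

variable {V : Type*} {G : SimpleGraph V}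

/-- Reachability within a vertex predicate `T`. -/
def ReachIn (G : SimpleGraph V) (T : V → Prop) (u v : V) : Prop :=
  ∃ w : G.Walk u v, ∀ z ∈ w.support, T z

theorem ReachIn.refl {T : V → Prop} {u : V} (h : T u) : ReachIn G T u u :=
  ⟨Walk.nil, by simp [h]⟩

theorem ReachIn.symm {T : V → Prop} {u v : V} (h : ReachIn G T u v) : ReachIn G T v u := by
  obtain ⟨w, hw⟩ := h
  exact ⟨w.reverse, fun z hz => hw z (by simpa [Walk.support_reverse] using hz)⟩

theorem ReachIn.trans {T : V → Prop} {u v x : V} (h : ReachIn G T u v)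
    (h' : ReachIn G T v x) : ReachIn G T u x := by
  obtain ⟨w, hw⟩ := h; obtain ⟨w', hw'⟩ := h'
  refine ⟨w.append w', fun z hz => ?_⟩
  rcases (Walk.mem_support_append_iff _ _).1 hz with h | h
  · exact hw z h
  · exact hw' z h

theorem ReachIn.step {T : V → Prop} {u v x : V} (h : ReachIn G T u v)
    (hadj : G.Adj v x) (hx : T x) : ReachIn G T u x := by
  refine h.trans ⟨Walk.cons hadj Walk.nil, ?_⟩
  have hv : T v := by obtain ⟨w, hw⟩ := h; exact hw v w.end_mem_support
  intro z hz; simp at hz; rcases hz with rfl | rfl <;> assumption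

theorem ReachIn.of_mem_support [DecidableEq V] {T : V → Prop} {u v z : V} (w : G.Walk u v)
    (hw : ∀ z ∈ w.support, T z) (hz : z ∈ w.support) : ReachIn G T u z :=
  ⟨w.takeUntil z hz, fun z' hz' => hw z' (w.support_takeUntil_subset hz hz')⟩

theorem adj_of_length_one {u v : V} (p : G.Walk u v) (h : p.length = 1) : G.Adj u v := by
  cases p with
  | nil => simp at h
  | cons hadj q =>
    have : q.length = 0 := by simpa using h
    exact (Walk.eq_of_length_eq_zero this) ▸ hadj

/-- A minimum-length walk (under a support constraint closed under taking
subwalks) is an induced path: adjacent support vertices are joined by walk edges. -/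
theorem induced_of_min [DecidableEq V] (T : V → Prop) {x y : V} (p : G.Walk x y) :
    (∀ z ∈ p.support, T z) →
    (∀ q : G.Walk x y, (∀ z ∈ q.support, T z) → p.length ≤ q.length) →
    ∀ u w, u ∈ p.support → w ∈ p.support → G.Adj u w → s(u, w) ∈ p.edges := by
  induction p with
  | nil =>
    intro _ _ u w hu hw hadj
    simp at hu hw; subst hu; subst hw; exact absurd hadj (G.irrefl)
  | @cons x c y hxc p' ih =>
    intro hsub hmin u w hu hw hadj
    have hsub' : ∀ z ∈ p'.support, T z := fun z hz => hsub z (by simp [hz])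
    have hmin' : ∀ q : G.Walk c y, (∀ z ∈ q.support, T z) → p'.length ≤ q.length := by
      intro q hq
      have := hmin (Walk.cons hxc q) (by
        intro z hz
        rw [Walk.support_cons] at hz
        rcases List.mem_cons.1 hz with rfl | hz
        · exact hsub _ (by simp)
        · exact hq z hz)
      simpa using this
    have key : ∀ u', u' ∈ p'.support → G.Adj x u' → s(x, u') ∈ (Walk.cons hxc p').edges := by
      intro u' hu' hadj'
      by_cases hc : u' = c
      · subst hc; simp
      · exfalso
        have hsplit := p'.take_spec hu'
        have hlen : (p'.takeUntil u' hu').length + (p'.dropUntil u' hu').length = p'.length := by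
          rw [← Walk.length_append, hsplit]
        have ht1 : 1 ≤ (p'.takeUntil u' hu').length := by
          rcases Nat.eq_zero_or_pos (p'.takeUntil u' hu').length with h0 | h1
          · exact absurd (Walk.eq_of_length_eq_zero h0).symm hc
          · exact h1
        have := hmin (Walk.cons hadj' (p'.dropUntil u' hu')) (by
          intro z hz
          rw [Walk.support_cons] at hz
          rcases List.mem_cons.1 hz with rfl | hz
          · exact hsub _ (by simp)
          · exact hsub' z (p'.support_dropUntil_subset hu' hz))
        simp only [Walk.length_cons] at this
        omega
    rw [Walk.support_cons] at hu hw
    rcases List.mem_cons.1 hu with hux | hu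
    · rcases List.mem_cons.1 hw with hwx | hw
      · exact absurd (hwx ▸ hux ▸ hadj) (G.irrefl)
      · exact hux ▸ key w hw (hux ▸ hadj)
    · rcases List.mem_cons.1 hw with hwx | hw
      · rw [Sym2.eq_swap]; exact hwx ▸ key u hu (hwx ▸ hadj.symm)
      · have := ih hsub' hmin' u w hu hw hadj
        rw [Walk.edges_cons]
        exact List.mem_cons_of_mem _ this

theorem exists_induced_path (T : V → Prop) {x y : V}
    (hw : ∃ w : G.Walk x y, ∀ z ∈ w.support, T z) :
    ∃ p : G.Walk x y, p.IsPath ∧ (∀ z ∈ p.support, T z) ∧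
      (∀ u w, u ∈ p.support → w ∈ p.support → G.Adj u w → s(u, w) ∈ p.edges) := by
  classical
  have hex : ∃ n, ∃ w : G.Walk x y, (∀ z ∈ w.support, T z) ∧ w.length = n := by
    obtain ⟨w, hw⟩ := hw; exact ⟨w.length, w, hw, rfl⟩
  obtain ⟨w0, hw0, hlen0⟩ := Nat.find_spec hex
  have hmin0 : ∀ q : G.Walk x y, (∀ z ∈ q.support, T z) → Nat.find hex ≤ q.length :=
    fun q hq => Nat.find_min' hex ⟨q, hq, rfl⟩
  have hbsub : ∀ z ∈ w0.bypass.support, T z := fun z hz => hw0 z (w0.support_bypass_subset hz)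
  have hblen : w0.bypass.length = Nat.find hex := le_antisymm (hlen0 ▸ w0.length_bypass_le) (hmin0 _ hbsub)
  have hbmin : ∀ q : G.Walk x y, (∀ z ∈ q.support, T z) → w0.bypass.length ≤ q.length :=
    fun q hq => hblen ▸ hmin0 q hq
  exact ⟨w0.bypass, w0.bypass_isPath, hbsub, induced_of_min T _ hbsub hbmin⟩


theorem no_double_path [DecidableEq V] (hch : IsChordal G) {x y : V} (hne : x ≠ y)
    (hxy : ¬G.Adj x y) {A B : V → Prop}
    (hd : ∀ z, A z → B z → False) (hsep : ∀ a b, A a → B b → ¬G.Adj a b)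
    (hxA : ¬A x) (hxB : ¬B x) (hyA : ¬A y) (hyB : ¬B y)
    (hA : ∃ w : G.Walk x y, ∀ z ∈ w.support, A z ∨ z = x ∨ z = y)
    (hB : ∃ w : G.Walk x y, ∀ z ∈ w.support, B z ∨ z = x ∨ z = y) : False := by
  obtain ⟨pA, hpA, hAsub, hAind⟩ := exists_induced_path _ hA
  obtain ⟨pB, hpB, hBsub, hBind⟩ := exists_induced_path _ hB
  have hintA : ∀ z ∈ pA.support, z ≠ x → z ≠ y → A z := by
    intro z hz h1 h2
    rcases hAsub z hz with h | h | h
    · exact h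
    · exact absurd h h1
    · exact absurd h h2
  have hintB : ∀ z ∈ pB.support, z ≠ x → z ≠ y → B z := by
    intro z hz h1 h2
    rcases hBsub z hz with h | h | h
    · exact h
    · exact absurd h h1
    · exact absurd h h2
  have honlyxy : ∀ z, z ∈ pA.support → z ∈ pB.support → z = x ∨ z = y := by
    intro z h1 h2
    by_contra hcon
    push_neg at hcon
    exact hd z (hintA z h1 hcon.1 hcon.2) (hintB z h2 hcon.1 hcon.2)
  have hlenA : 2 ≤ pA.length := by
    rcases Nat.lt_or_ge pA.length 2 with h | h
    · interval_cases h' : pA.length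
      · exact absurd (Walk.eq_of_length_eq_zero h') hne
      · exact absurd (adj_of_length_one pA h') hxy
    · exact h
  have hlenB : 2 ≤ pB.length := by
    rcases Nat.lt_or_ge pB.length 2 with h | h
    · interval_cases h' : pB.length
      · exact absurd (Walk.eq_of_length_eq_zero h') hne
      · exact absurd (adj_of_length_one pB h') hxy
    · exact h
  set C : G.Walk x x := pA.append pB.reverse with hC
  have hClen : C.length = pA.length + pB.length := by
    rw [hC, Walk.length_append, Walk.length_reverse]
  have hC4 : 4 ≤ C.length := by omega
  -- membership in C's support
  have hmemC : ∀ z ∈ C.support, z ∈ pA.support ∨ z ∈ pB.support := by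
    intro z hz
    rw [hC, Walk.mem_support_append_iff] at hz
    rcases hz with h | h
    · exact Or.inl h
    · right; rw [Walk.support_reverse, List.mem_reverse] at h; exact h
  -- edges of C
  have hCedges : C.edges = pA.edges ++ pB.edges.reverse := by
    rw [hC, Walk.edges_append, Walk.edges_reverse]
  -- trail
  have htrail : C.edges.Nodup := by
    rw [hCedges]
    refine List.Nodup.append hpA.edges_nodup (List.nodup_reverse.2 hpB.edges_nodup) ?_
    intro e heA heB
    rw [List.mem_reverse] at heB
    induction e with
    | h u v =>
      have hadj : G.Adj u v := pA.adj_of_mem_edges heA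
      have hu : u = x ∨ u = y := honlyxy u (pA.fst_mem_support_of_mem_edges heA)
        (pB.fst_mem_support_of_mem_edges heB)
      have hv : v = x ∨ v = y := honlyxy v (pA.snd_mem_support_of_mem_edges heA)
        (pB.snd_mem_support_of_mem_edges heB)
      rcases hu with rfl | rfl <;> rcases hv with rfl | rfl
      · exact G.irrefl hadj
      · exact hxy hadj
      · exact hxy hadj.symm
      · exact G.irrefl hadj
  have hnenil : C ≠ Walk.nil := by
    intro h
    rw [h] at hClen
    simp at hClen
    omega
  have hsupptail : C.support.tail.Nodup := by
    have ht : C.support.tail = pA.support.tail ++ pB.reverse.support.tail := by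
      rw [hC, Walk.support_append, List.tail_append_of_ne_nil (Walk.support_ne_nil _)]
    rw [ht]
    refine List.Nodup.append (hpA.support_nodup.sublist (List.tail_sublist _))
      ((hpB.reverse.support_nodup).sublist (List.tail_sublist _)) ?_
    intro z hzA hzB
    have hzx : z ≠ x := by
      intro h
      have := pA.support_eq_cons
      rw [this] at *
      have hnd := hpA.support_nodup
      rw [pA.support_eq_cons] at hnd
      exact (List.nodup_cons.1 hnd).1 (h ▸ hzA)
    have hzy : z ≠ y := by
      intro h
      have hnd := hpB.reverse.support_nodup
      rw [pB.reverse.support_eq_cons] at hnd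
      exact (List.nodup_cons.1 hnd).1 (h ▸ hzB)
    have hz1 : z ∈ pA.support := List.mem_of_mem_tail hzA
    have hz2 : z ∈ pB.support := by
      have := List.mem_of_mem_tail hzB
      rwa [Walk.support_reverse, List.mem_reverse] at this
    rcases honlyxy z hz1 hz2 with h | h
    · exact hzx h
    · exact hzy h
  have hcycle : C.IsCycle := ⟨⟨⟨htrail⟩, hnenil⟩, hsupptail⟩
  obtain ⟨x0, y0, hx0, hy0, hadj, hnotedge⟩ := hch C hcycle hC4
  apply hnotedge
  rw [hCedges]
  have hx0' := hmemC x0 hx0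
  have hy0' := hmemC y0 hy0
  by_cases hc1 : x0 ∈ pA.support ∧ y0 ∈ pA.support
  · exact List.mem_append_left _ (hAind x0 y0 hc1.1 hc1.2 hadj)
  by_cases hc2 : x0 ∈ pB.support ∧ y0 ∈ pB.support
  · exact List.mem_append_right _ (List.mem_reverse.2 (hBind x0 y0 hc2.1 hc2.2 hadj))
  exfalso
  rcases hx0' with hxA0 | hxB0
  · have hyB0 : y0 ∈ pB.support := by
      rcases hy0' with h | h
      · exact absurd ⟨hxA0, h⟩ hc1
      · exact h
    have hx0nB : x0 ∉ pB.support := fun h => hc2 ⟨h, hyB0⟩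
    have hy0nA : y0 ∉ pA.support := fun h => hc1 ⟨hxA0, h⟩
    have hx0A : A x0 := hintA x0 hxA0 (fun h => hx0nB (h ▸ pB.start_mem_support))
      (fun h => hx0nB (h ▸ pB.end_mem_support))
    have hy0B : B y0 := hintB y0 hyB0 (fun h => hy0nA (h ▸ pA.start_mem_support))
      (fun h => hy0nA (h ▸ pA.end_mem_support))
    exact hsep x0 y0 hx0A hy0B hadj
  · have hyA0 : y0 ∈ pA.support := by
      rcases hy0' with h | h
      · exact h
      · exact absurd ⟨hxB0, h⟩ hc2
    have hx0nA : x0 ∉ pA.support := fun h => hc1 ⟨h, hyA0⟩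
    have hy0nB : y0 ∉ pB.support := fun h => hc2 ⟨hxB0, h⟩
    have hx0B : B x0 := hintB x0 hxB0 (fun h => hx0nA (h ▸ pA.start_mem_support))
      (fun h => hx0nA (h ▸ pA.end_mem_support))
    have hy0A : A y0 := hintA y0 hyA0 (fun h => hy0nB (h ▸ pB.start_mem_support))
      (fun h => hy0nB (h ▸ pB.end_mem_support))
    exact hsep y0 x0 hy0A hx0B hadj.symm


/-- Walking from `u` (in `T`) to `x` through `T ∪ {x}` produces a `T`-vertex adjacent
to `x` that is `T`-reachable from `u`. -/
theorem exists_adj_anchor {T : V → Prop} {u x : V} (p : G.Walk u x) :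
    u ≠ x → (∀ z ∈ p.support, z = x ∨ T z) → T u →
    ∃ w, T w ∧ G.Adj w x ∧ ReachIn G T u w := by
  induction p with
  | nil => intro h _ _; exact absurd rfl h
  | @cons u c x' hadj q ih =>
    intro hne hsup hu
    by_cases hcx : c = x'
    · subst hcx
      exact ⟨u, hu, hadj, ReachIn.refl hu⟩
    · have hcT : T c := (hsup c (by simp)).resolve_left hcx
      obtain ⟨w, hwT, hwx, hr⟩ := ih hcx (fun z hz => hsup z (by simp [hz])) hcT
      refine ⟨w, hwT, hwx, ReachIn.trans ⟨Walk.cons hadj Walk.nil, ?_⟩ hr⟩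
      intro z hz; simp at hz; rcases hz with rfl | rfl <;> assumption

/-- `v` is simplicial within the vertex set `s`. -/
def SimpIn (G : SimpleGraph V) (s : Finset V) (v : V) : Prop :=
  v ∈ s ∧ ∀ x ∈ s, ∀ y ∈ s, G.Adj v x → G.Adj v y → x ≠ y → G.Adj x y

theorem dirac [DecidableEq V] (hch : IsChordal G) :
    ∀ s : Finset V, s.Nonempty →
      (∀ x ∈ s, ∀ y ∈ s, x ≠ y → G.Adj x y) ∨
      ∃ v₁ v₂, v₁ ≠ v₂ ∧ ¬G.Adj v₁ v₂ ∧ SimpIn G s v₁ ∧ SimpIn G s v₂ := by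
  intro s
  induction s using Finset.strongInduction with
  | _ s ih =>
  intro hsne
  by_cases hcl : ∀ x ∈ s, ∀ y ∈ s, x ≠ y → G.Adj x y
  · exact Or.inl hcl
  push_neg at hcl
  obtain ⟨a, ha, b, hb, hab, hnadj⟩ := hcl
  classical
  set Sep : Finset V → Prop :=
    fun S => a ∉ S ∧ b ∉ S ∧ ¬ ReachIn G (fun z => z ∈ s \ S) a b with hSep
  set 𝒮 : Finset (Finset V) := s.powerset.filter Sep with h𝒮
  have h𝒮₀ : (s.erase a).erase b ∈ 𝒮 := by
    rw [h𝒮, Finset.mem_filter, Finset.mem_powerset]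
    refine ⟨(Finset.erase_subset _ _).trans (Finset.erase_subset _ _), ?_, ?_, ?_⟩
    · simp [hab]
    · simp
    · rintro ⟨p, hp⟩
      have hmem : ∀ z ∈ p.support, z = a ∨ z = b := by
        intro z hz
        have := hp z hz
        simp only [Finset.mem_sdiff, Finset.mem_erase] at this
        by_contra hcon
        push_neg at hcon
        exact (this.2 ⟨hcon.2, hcon.1, this.1⟩).elim
      cases p with
      | nil => exact hab rfl
      | @cons _ c _ h q =>
        rcases hmem c (by simp) with rfl | rfl
        · exact G.irrefl h
        · exact hnadj h
  obtain ⟨S, hS𝒮, hSmin⟩ := Finset.exists_min_image 𝒮 Finset.card ⟨_, h𝒮₀⟩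
  rw [h𝒮, Finset.mem_filter, Finset.mem_powerset] at hS𝒮
  obtain ⟨hSsub, haS, hbS, hsepS⟩ := hS𝒮
  set T : V → Prop := fun z => z ∈ s \ S with hT
  set A : Finset V := (s \ S).filter (fun z => ReachIn G T a z) with hA
  set B : Finset V := (s \ S).filter (fun z => ReachIn G T b z) with hB
  have haA : a ∈ A := by
    rw [hA, Finset.mem_filter]
    exact ⟨Finset.mem_sdiff.2 ⟨ha, haS⟩, ReachIn.refl (Finset.mem_sdiff.2 ⟨ha, haS⟩)⟩
  have hbB : b ∈ B := by
    rw [hB, Finset.mem_filter]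
    exact ⟨Finset.mem_sdiff.2 ⟨hb, hbS⟩, ReachIn.refl (Finset.mem_sdiff.2 ⟨hb, hbS⟩)⟩
  have hreachA : ∀ z ∈ A, ReachIn G T a z := fun z hz => (Finset.mem_filter.1 hz).2
  have hreachB : ∀ z ∈ B, ReachIn G T b z := fun z hz => (Finset.mem_filter.1 hz).2
  have hdAB : ∀ z, z ∈ A → z ∈ B → False := by
    intro z hzA hzB
    exact hsepS ((hreachA z hzA).trans (hreachB z hzB).symm)
  have hmemA : ∀ z, z ∈ s \ S → ReachIn G T a z → z ∈ A := by
    intro z h1 h2; rw [hA, Finset.mem_filter]; exact ⟨h1, h2⟩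
  have hmemB : ∀ z, z ∈ s \ S → ReachIn G T b z → z ∈ B := by
    intro z h1 h2; rw [hB, Finset.mem_filter]; exact ⟨h1, h2⟩
  have hsepAB : ∀ u w, u ∈ A → w ∈ B → ¬G.Adj u w := by
    intro u w hu hw hadj
    have huT : u ∈ s \ S := (Finset.mem_filter.1 hu).1
    have hwT : w ∈ s \ S := (Finset.mem_filter.1 hw).1
    exact hdAB w (hmemA w hwT ((hreachA u hu).step hadj hwT)) hw
  have hcloA : ∀ u ∈ A, ∀ w ∈ s, G.Adj u w → w ∈ A ∪ S := by
    intro u hu w hw hadj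
    by_cases hwS : w ∈ S
    · exact Finset.mem_union_right _ hwS
    · exact Finset.mem_union_left _
        (hmemA w (Finset.mem_sdiff.2 ⟨hw, hwS⟩) ((hreachA u hu).step hadj (Finset.mem_sdiff.2 ⟨hw, hwS⟩)))
  have hcloB : ∀ u ∈ B, ∀ w ∈ s, G.Adj u w → w ∈ B ∪ S := by
    intro u hu w hw hadj
    by_cases hwS : w ∈ S
    · exact Finset.mem_union_right _ hwS
    · exact Finset.mem_union_left _
        (hmemB w (Finset.mem_sdiff.2 ⟨hw, hwS⟩) ((hreachB u hu).step hadj (Finset.mem_sdiff.2 ⟨hw, hwS⟩)))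
  -- every separator vertex has neighbors in both A and B
  have anchor : ∀ x' ∈ S, (∃ u ∈ A, G.Adj u x') ∧ (∃ u ∈ B, G.Adj u x') := by
    intro x' hx'
    have hcard : (S.erase x').card < S.card := Finset.card_erase_lt_of_mem hx'
    have hS' : S.erase x' ∉ 𝒮 := by
      intro h
      have := hSmin _ h
      omega
    have hreach : ReachIn G (fun z => z ∈ s \ S.erase x') a b := by
      by_contra h
      refine hS' ?_
      rw [h𝒮, Finset.mem_filter, Finset.mem_powerset]
      exact ⟨(Finset.erase_subset _ _).trans hSsub,
        fun hmem => haS (Finset.mem_of_mem_erase hmem),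
        fun hmem => hbS (Finset.mem_of_mem_erase hmem), h⟩
    obtain ⟨W, hW⟩ := hreach
    have hx'W : x' ∈ W.support := by
      by_contra hx'W
      refine hsepS ⟨W, fun z hz => ?_⟩
      have := hW z hz
      simp only [Finset.mem_sdiff] at this
      show z ∈ s \ S
      rw [Finset.mem_sdiff]
      refine ⟨this.1, fun hzS => ?_⟩
      have hzx' : z ≠ x' := fun h => hx'W (h ▸ hz)
      exact this.2 (Finset.mem_erase.2 ⟨hzx', hzS⟩)
    have hsupcond : ∀ {u₀ : V} (W' : G.Walk u₀ x'), (∀ z ∈ W'.support, z ∈ W.support) →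
        ∀ z ∈ W'.support, z = x' ∨ T z := by
      intro u₀ W' hsub z hz
      by_cases hzx : z = x'
      · exact Or.inl hzx
      · right
        have := hW z (hsub z hz)
        simp only [Finset.mem_sdiff] at this
        show z ∈ s \ S
        rw [Finset.mem_sdiff]
        refine ⟨this.1, fun hzS => this.2 (Finset.mem_erase.2 ⟨hzx, hzS⟩)⟩
    have hax' : a ≠ x' := fun h => haS (h ▸ hx')
    have hbx' : b ≠ x' := fun h => hbS (h ▸ hx')
    have haT : T a := Finset.mem_sdiff.2 ⟨ha, haS⟩
    have hbT : T b := Finset.mem_sdiff.2 ⟨hb, hbS⟩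
    obtain ⟨u₁, hu₁T, hu₁x, hr₁⟩ := exists_adj_anchor (W.takeUntil x' hx'W) hax'
      (hsupcond _ (fun z hz => W.support_takeUntil_subset hx'W hz)) haT
    obtain ⟨u₂, hu₂T, hu₂x, hr₂⟩ := exists_adj_anchor (W.dropUntil x' hx'W).reverse hbx'
      (hsupcond _ (fun z hz => W.support_dropUntil_subset hx'W
        (by rwa [Walk.support_reverse, List.mem_reverse] at hz))) hbT
    exact ⟨⟨u₁, hmemA u₁ hu₁T hr₁, hu₁x⟩, ⟨u₂, hmemB u₂ hu₂T hr₂, hu₂x⟩⟩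
  -- S is a clique
  have Sclique : ∀ x ∈ S, ∀ y ∈ S, x ≠ y → G.Adj x y := by
    intro x hxS y hyS hxyne
    by_contra hnxy
    obtain ⟨⟨uA, huA, huAx⟩, ⟨uB, huB, huBx⟩⟩ := anchor x hxS
    obtain ⟨⟨wA, hwA, hwAy⟩, ⟨wB, hwB, hwBy⟩⟩ := anchor y hyS
    have hreachinA : ∀ u ∈ A, ∀ w ∈ A, ReachIn G (fun z => z ∈ A) u w := by
      intro u hu w hw
      have key : ∀ z ∈ A, ReachIn G (fun z => z ∈ A) a z := by
        intro z hz
        obtain ⟨p, hp⟩ := hreachA z hz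
        exact ⟨p, fun z' hz' => hmemA z' (hp z' hz') (ReachIn.of_mem_support p hp hz')⟩
      exact (key u hu).symm.trans (key w hw)
    have hreachinB : ∀ u ∈ B, ∀ w ∈ B, ReachIn G (fun z => z ∈ B) u w := by
      intro u hu w hw
      have key : ∀ z ∈ B, ReachIn G (fun z => z ∈ B) b z := by
        intro z hz
        obtain ⟨p, hp⟩ := hreachB z hz
        exact ⟨p, fun z' hz' => hmemB z' (hp z' hz') (ReachIn.of_mem_support p hp hz')⟩
      exact (key u hu).symm.trans (key w hw)
    have hwalkA : ∃ w : G.Walk x y, ∀ z ∈ w.support, z ∈ A ∨ z = x ∨ z = y := by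
      obtain ⟨p, hp⟩ := hreachinA uA huA wA hwA
      refine ⟨Walk.cons huAx.symm (p.concat hwAy), ?_⟩
      intro z hz
      rw [Walk.support_cons] at hz
      rcases List.mem_cons.1 hz with rfl | hz
      · exact Or.inr (Or.inl rfl)
      · rw [Walk.support_concat] at hz
        simp only [List.concat_eq_append, List.mem_append, List.mem_singleton] at hz
        rcases hz with hz | rfl
        · exact Or.inl (hp z hz)
        · exact Or.inr (Or.inr rfl)
    have hwalkB : ∃ w : G.Walk x y, ∀ z ∈ w.support, z ∈ B ∨ z = x ∨ z = y := by
      obtain ⟨p, hp⟩ := hreachinB uB huB wB hwB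
      refine ⟨Walk.cons huBx.symm (p.concat hwBy), ?_⟩
      intro z hz
      rw [Walk.support_cons] at hz
      rcases List.mem_cons.1 hz with rfl | hz
      · exact Or.inr (Or.inl rfl)
      · rw [Walk.support_concat] at hz
        simp only [List.concat_eq_append, List.mem_append, List.mem_singleton] at hz
        rcases hz with hz | rfl
        · exact Or.inl (hp z hz)
        · exact Or.inr (Or.inr rfl)
    have hxnAB : ∀ z, z ∈ S → ¬(z ∈ A) ∧ ¬(z ∈ B) := by
      intro z hz
      constructor <;> intro hmem
      · exact (Finset.mem_sdiff.1 (Finset.mem_filter.1 hmem).1).2 hz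
      · exact (Finset.mem_sdiff.1 (Finset.mem_filter.1 hmem).1).2 hz
    exact no_double_path hch hxyne hnxy hdAB hsepAB
      (hxnAB x hxS).1 (hxnAB x hxS).2 (hxnAB y hyS).1 (hxnAB y hyS).2 hwalkA hwalkB
  -- extract a simplicial vertex from a component side
  have getSimp : ∀ C : Finset V, (∀ u ∈ C, ∀ w ∈ s, G.Adj u w → w ∈ C ∪ S) →
      C ∪ S ⊆ s → (∃ z, z ∈ s ∧ z ∉ C ∪ S) → C.Nonempty → ∃ v ∈ C, SimpIn G s v := by
    intro C hclo hsub ⟨z0, hz0s, hz0⟩ hCne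
    have hss : C ∪ S ⊂ s := ⟨hsub, fun h => hz0 (h hz0s)⟩
    have hCSne : (C ∪ S).Nonempty := hCne.mono Finset.subset_union_left
    rcases ih (C ∪ S) hss hCSne with hcl2 | ⟨v₁, v₂, hne12, hnadj2, h₁, h₂⟩
    · obtain ⟨cc, hcc⟩ := hCne
      refine ⟨cc, hcc, hsub (Finset.mem_union_left _ hcc), ?_⟩
      intro x hx y hy h1 h2 hxyne
      exact hcl2 x (hclo cc hcc x hx h1) y (hclo cc hcc y hy h2) hxyne
    · have hv : v₁ ∈ C ∨ v₂ ∈ C := by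
        by_contra hcon
        push_neg at hcon
        have hv₁ : v₁ ∈ S := (Finset.mem_union.1 h₁.1).resolve_left hcon.1
        have hv₂ : v₂ ∈ S := (Finset.mem_union.1 h₂.1).resolve_left hcon.2
        exact hnadj2 (Sclique v₁ hv₁ v₂ hv₂ hne12)
      rcases hv with hv | hv
      · refine ⟨v₁, hv, hsub h₁.1, ?_⟩
        intro x hx y hy h1 h2 hxyne
        exact h₁.2 x (hclo v₁ hv x hx h1) y (hclo v₁ hv y hy h2) h1 h2 hxyne
      · refine ⟨v₂, hv, hsub h₂.1, ?_⟩
        intro x hx y hy h1 h2 hxyne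
        exact h₂.2 x (hclo v₂ hv x hx h1) y (hclo v₂ hv y hy h2) h1 h2 hxyne
  have hAS : A ∪ S ⊆ s := by
    intro z hz
    rcases Finset.mem_union.1 hz with h | h
    · exact (Finset.mem_sdiff.1 (Finset.mem_filter.1 h).1).1
    · exact hSsub h
  have hBS : B ∪ S ⊆ s := by
    intro z hz
    rcases Finset.mem_union.1 hz with h | h
    · exact (Finset.mem_sdiff.1 (Finset.mem_filter.1 h).1).1
    · exact hSsub h
  obtain ⟨v₁, hv₁A, hs₁⟩ := getSimp A hcloA hAS
    ⟨b, hb, by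
      intro h
      rcases Finset.mem_union.1 h with h | h
      · exact hdAB b h hbB
      · exact hbS h⟩ ⟨a, haA⟩
  obtain ⟨v₂, hv₂B, hs₂⟩ := getSimp B hcloB hBS
    ⟨a, ha, by
      intro h
      rcases Finset.mem_union.1 h with h | h
      · exact hdAB a haA h
      · exact haS h⟩ ⟨b, hbB⟩
  right
  refine ⟨v₁, v₂, ?_, hsepAB v₁ v₂ hv₁A hv₂B, hs₁, hs₂⟩
  intro h
  exact hdAB v₁ hv₁A (h ▸ hv₂B)

theorem exists_simplicial [Fintype V] [Nonempty V] [DecidableEq V] (hch : IsChordal G) :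
    ∃ v : V, ∀ x y, G.Adj v x → G.Adj v y → x ≠ y → G.Adj x y := by
  rcases dirac hch Finset.univ Finset.univ_nonempty with hcl | ⟨v₁, _, _, _, h₁, _⟩
  · exact ⟨Classical.arbitrary V, fun x y _ _ hne => hcl x (Finset.mem_univ _) y (Finset.mem_univ _) hne⟩
  · exact ⟨v₁, fun x y h1 h2 hne => h₁.2 x (Finset.mem_univ _) y (Finset.mem_univ _) h1 h2 hne⟩

end ChordalAux

theorem chordal_fall_eq_minDegree_succ {V : Type*} [Fintype V] [Nonempty V]
    (G : SimpleGraph V) [DecidableRel G.Adj] (hchordal : IsChordal G) (k : ℕ)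
    (c : V → Fin k) (h : IsFallColoring G k c) : k = G.minDegree + 1 := by
  classical
  obtain ⟨hproper, hfall⟩ := h
  have hk : 0 < k := (c (Classical.arbitrary V)).pos
  obtain ⟨v, hv⟩ := G.exists_minimal_degree_vertex
  have h1 : k - 1 ≤ G.minDegree := by
    rw [hv]
    have hcard : (Finset.univ.erase (c v)).card ≤ (G.neighborFinset v).card := by
      refine Finset.card_le_card_of_injOn
        (fun j => if h : ∃ w, G.Adj v w ∧ c w = j then h.choose else v) ?_ ?_
      · intro j hj
        have hj' : j ≠ c v := (Finset.mem_erase.1 hj).1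
        have hex := hfall v j hj'
        simp only [dif_pos hex]
        exact (G.mem_neighborFinset v _).2 hex.choose_spec.1
      · intro j1 hj1 j2 hj2 heq
        have hex1 := hfall v j1 ((Finset.mem_erase.1 (Finset.mem_coe.1 hj1)).1)
        have hex2 := hfall v j2 ((Finset.mem_erase.1 (Finset.mem_coe.1 hj2)).1)
        simp only [dif_pos hex1, dif_pos hex2] at heq
        rw [← hex1.choose_spec.2, ← hex2.choose_spec.2, heq]
    rw [Finset.card_erase_of_mem (Finset.mem_univ _), Finset.card_univ, Fintype.card_fin] at hcard
    exact hcard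
  obtain ⟨v₀, hsimp⟩ := ChordalAux.exists_simplicial hchordal
  have h2 : G.degree v₀ ≤ k - 1 := by
    have hcard : (G.neighborFinset v₀).card ≤ (Finset.univ.erase (c v₀)).card := by
      refine Finset.card_le_card_of_injOn c ?_ ?_
      · intro w hw
        refine Finset.mem_erase.2 ⟨?_, Finset.mem_univ _⟩
        exact fun hcc => hproper v₀ w ((G.mem_neighborFinset v₀ w).1 hw) hcc.symm
      · intro w1 hw1 w2 hw2 heq
        by_contra hne
        exact hproper w1 w2
          (hsimp w1 w2 ((G.mem_neighborFinset v₀ w1).1 (Finset.mem_coe.1 hw1))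
            ((G.mem_neighborFinset v₀ w2).1 (Finset.mem_coe.1 hw2)) hne) heq
    rwa [Finset.card_erase_of_mem (Finset.mem_univ _), Finset.card_univ, Fintype.card_fin] at hcard
  have h3 : G.minDegree ≤ G.degree v₀ := G.minDegree_le_degree v₀
  omega
end
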